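/- Let 0 < d < 1, k ≥ 1, t > 0, c ∈ (0,1), and 0 < ξ < 1. Suppose κ ∈ (0,1) has density proportional to κ^{d+k/2−1}(1−κ+κc)^{−d−1} exp(−κt/2). Then E[κ·1{κ≤ξ}] ≤ K/t, with K depending only on d, k, ξ (e.g. K = (d+k/2)·2·(1−ξ)^{−d−1}(1+ξ)^{d+1}). -/

import Mathlib

/-!
On `(0, ξ]` the weight `(1 - κ + κ c)^(-d-1)` lies between `1` and `(1 - ξ)^(-d-1)`, so up to
that constant the ratio is bounded by `∫₀^ξ κ^a e^{-κt/2} / ∫₀^ξ κ^(a-1) e^{-κt/2}` with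
`a = d + k/2`. Differentiating `κ^a e^{-κt/2}` and integrating over `[0, ξ]` gives
`(t/2) ∫₀^ξ κ^a e^{-κt/2} = a ∫₀^ξ κ^(a-1) e^{-κt/2} - ξ^a e^{-ξt/2}`,
so this ratio is at most `2a/t`.
-/

open MeasureTheory Set

lemma intervalIntegrable_rpow_mul_exp_neg_mul {p : ℝ} (hp : -1 < p) (r a b : ℝ) :
    IntervalIntegrable (fun x => x ^ p * Real.exp (-r * x)) volume a b :=
  (intervalIntegral.intervalIntegrable_rpow' hp).mul_continuousOn (by fun_prop)

lemma mul_integral_rpow_mul_exp_neg_mul {a : ℝ} (ha : 0 < a) (r : ℝ) {b : ℝ} (hb : 0 ≤ b) :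
    r * ∫ x in 0..b, x ^ a * Real.exp (-r * x) =
      (a * ∫ x in 0..b, x ^ (a - 1) * Real.exp (-r * x)) - b ^ a * Real.exp (-r * b) := by
  have hcont : ContinuousOn (fun x => x ^ a * Real.exp (-r * x)) (Icc 0 b) :=
    ((Real.continuous_rpow_const ha.le).mul (by fun_prop)).continuousOn
  have hderiv : ∀ x ∈ Ioo 0 b, HasDerivAt (fun x => x ^ a * Real.exp (-r * x))
      (a * (x ^ (a - 1) * Real.exp (-r * x)) - r * (x ^ a * Real.exp (-r * x))) x := by
    intro x hx
    have hexp : HasDerivAt (fun x => Real.exp (-r * x)) (Real.exp (-r * x) * -r) x := by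
      simpa using ((hasDerivAt_id x).const_mul (-r)).exp
    exact ((Real.hasDerivAt_rpow_const (Or.inl hx.1.ne')).fun_mul hexp).congr_deriv (by ring)
  have hf := intervalIntegrable_rpow_mul_exp_neg_mul (p := a) (by linarith) r 0 b
  have hg := intervalIntegrable_rpow_mul_exp_neg_mul (p := a - 1) (by linarith) r 0 b
  have hftc := intervalIntegral.integral_eq_sub_of_hasDerivAt_of_le hb hcont hderiv
    ((hg.const_mul a).sub (hf.const_mul r))
  rw [intervalIntegral.integral_sub (hg.const_mul a) (hf.const_mul r),
    intervalIntegral.integral_const_mul, intervalIntegral.integral_const_mul,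
    Real.zero_rpow ha.ne', zero_mul, sub_zero] at hftc
  linarith

lemma mul_integral_rpow_mul_exp_neg_mul_le {a : ℝ} (ha : 0 < a) (r : ℝ) {b : ℝ} (hb : 0 ≤ b) :
    r * ∫ x in 0..b, x ^ a * Real.exp (-r * x) ≤
      a * ∫ x in 0..b, x ^ (a - 1) * Real.exp (-r * x) := by
  rw [mul_integral_rpow_mul_exp_neg_mul ha r hb]
  have : 0 ≤ b ^ a * Real.exp (-r * b) := by positivity
  linarith

lemma one_sub_add_mul_pos {κ c : ℝ} (hκ : κ ∈ Icc 0 1) (hc : c ∈ Ioc 0 1) :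
    0 < 1 - κ + κ * c := by
  nlinarith [mul_nonneg (sub_nonneg.2 hκ.2) (sub_nonneg.2 hc.2), hc.1]

lemma integral_Ioc_mul_weighted_le {a c p ξ : ℝ} (ha : -1 < a) (hc : 0 ≤ c) (hp : p ≤ 0)
    (hξ : ξ < 1) (r : ℝ) :
    ∫ κ in Ioc 0 ξ, κ * (κ ^ (a - 1) * (1 - κ + κ * c) ^ p * Real.exp (-r * κ)) ≤
      (1 - ξ) ^ p * ∫ κ in Ioc 0 ξ, κ ^ a * Real.exp (-r * κ) := by
  rw [← MeasureTheory.integral_const_mul]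
  refine integral_mono_of_nonneg ?_
    (((intervalIntegrable_rpow_mul_exp_neg_mul ha r 0 ξ).1).const_mul _) ?_
  all_goals filter_upwards [ae_restrict_mem measurableSet_Ioc] with κ ⟨hκ0, hκξ⟩
  · have : 0 ≤ 1 - κ + κ * c := by nlinarith
    positivity
  · have hw : (1 - κ + κ * c) ^ p ≤ (1 - ξ) ^ p :=
      Real.rpow_le_rpow_of_nonpos (by linarith) (by nlinarith) hp
    rw [Real.rpow_sub_one hκ0.ne']
    calc κ * (κ ^ a / κ * (1 - κ + κ * c) ^ p * Real.exp (-r * κ))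
        = (1 - κ + κ * c) ^ p * (κ ^ a * Real.exp (-r * κ)) := by field_simp
      _ ≤ (1 - ξ) ^ p * (κ ^ a * Real.exp (-r * κ)) := by gcongr

lemma integral_Ioc_le_integral_Ioo_weighted {a c p ξ : ℝ} (ha : 0 < a) (hc : c ∈ Ioc 0 1)
    (hp : p ≤ 0) (hξ : ξ ≤ 1) (r : ℝ) :
    ∫ κ in Ioc 0 ξ, κ ^ (a - 1) * Real.exp (-r * κ) ≤
      ∫ κ in Ioo 0 1, κ ^ (a - 1) * (1 - κ + κ * c) ^ p * Real.exp (-r * κ) := by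
  have hw : ContinuousOn (fun κ : ℝ => (1 - κ + κ * c) ^ p) (uIcc 0 1) := by
    refine ContinuousOn.rpow_const (by fun_prop) fun κ hκ => Or.inl ?_
    rw [uIcc_of_le zero_le_one] at hκ
    exact (one_sub_add_mul_pos hκ hc).ne'
  have hint : IntegrableOn
      (fun κ => κ ^ (a - 1) * (1 - κ + κ * c) ^ p * Real.exp (-r * κ)) (Ioc 0 1) :=
    (((intervalIntegral.intervalIntegrable_rpow' (by linarith)).mul_continuousOn hw
      ).mul_continuousOn (by fun_prop)).1
  rw [← integral_Ioc_eq_integral_Ioo]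
  calc ∫ κ in Ioc 0 ξ, κ ^ (a - 1) * Real.exp (-r * κ)
      ≤ ∫ κ in Ioc 0 ξ, κ ^ (a - 1) * (1 - κ + κ * c) ^ p * Real.exp (-r * κ) := by
        refine integral_mono_of_nonneg ?_ (hint.mono_set (Ioc_subset_Ioc_right hξ)) ?_
        all_goals filter_upwards [ae_restrict_mem measurableSet_Ioc] with κ ⟨hκ0, hκξ⟩
        · positivity
        · have : 1 ≤ (1 - κ + κ * c) ^ p :=
            Real.one_le_rpow_of_pos_of_le_one_of_nonpos
              (one_sub_add_mul_pos ⟨hκ0.le, hκξ.trans hξ⟩ hc) (by nlinarith [hc.2]) hp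
          have : 0 ≤ κ ^ (a - 1) * Real.exp (-r * κ) := by positivity
          nlinarith
    _ ≤ ∫ κ in Ioc 0 1, κ ^ (a - 1) * (1 - κ + κ * c) ^ p * Real.exp (-r * κ) := by
        refine setIntegral_mono_set hint ?_ (Ioc_subset_Ioc_right hξ).eventuallyLE
        filter_upwards [ae_restrict_mem measurableSet_Ioc] with κ hκ
        have := one_sub_add_mul_pos (Ioc_subset_Icc_self hκ) hc
        have := hκ.1
        positivity

theorem EIG_posterior_kappa_below_bound_general
    (d : ℝ) (k : ℕ) (ξ : ℝ) (hd0 : 0 < d)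
    (hξ : ξ ∈ Ioo (0:ℝ) 1) :
    ∃ K : ℝ, 0 < K ∧ ∀ c ∈ Ioo (0:ℝ) 1, ∀ t : ℝ, 0 < t →
      (∫ κ in Ioc (0:ℝ) ξ,
          κ * (κ ^ (d + (k : ℝ) / 2 - 1) * (1 - κ + κ * c) ^ (-d - 1) *
            Real.exp (-κ * t / 2))) /
        (∫ κ in Ioo (0:ℝ) 1,
          κ ^ (d + (k : ℝ) / 2 - 1) * (1 - κ + κ * c) ^ (-d - 1) *
            Real.exp (-κ * t / 2))
      ≤ K / t := by
  obtain ⟨hξ0, hξ1⟩ := hξ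
  set a : ℝ := d + (k : ℝ) / 2
  have ha : 0 < a := by positivity
  have hp : -d - 1 ≤ 0 := by linarith
  have h1ξ : 0 < 1 - ξ := sub_pos.2 hξ1
  refine ⟨(1 - ξ) ^ (-d - 1) * (2 * a), by positivity, ?_⟩
  rintro c ⟨hc0, hc1⟩ t ht
  simp only [show ∀ κ : ℝ, -κ * t / 2 = -(t / 2) * κ from fun κ => by ring]
  have hnum := integral_Ioc_mul_weighted_le (a := a) (by linarith) hc0.le hp hξ1 (t / 2)
  have hden := integral_Ioc_le_integral_Ioo_weighted ha ⟨hc0, hc1.le⟩ hp hξ1.le (t / 2)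
  have hibp := mul_integral_rpow_mul_exp_neg_mul_le ha (t / 2) hξ0.le
  rw [intervalIntegral.integral_of_le hξ0.le, intervalIntegral.integral_of_le hξ0.le] at hibp
  have hI : 0 ≤ ∫ κ in Ioc 0 ξ, κ ^ (a - 1) * Real.exp (-(t / 2) * κ) :=
    setIntegral_nonneg measurableSet_Ioc fun κ hκ => by have := hκ.1; positivity
  refine div_le_of_le_mul₀ (hI.trans hden) (by positivity) ?_
  calc _ ≤ (1 - ξ) ^ (-d - 1) * ∫ κ in Ioc 0 ξ, κ ^ a * Real.exp (-(t / 2) * κ) := hnum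
    _ ≤ (1 - ξ) ^ (-d - 1) *
          (2 * a / t * ∫ κ in Ioc 0 ξ, κ ^ (a - 1) * Real.exp (-(t / 2) * κ)) := by
        gcongr
        rw [div_mul_eq_mul_div, le_div_iff₀ ht]
        linarith
    _ = (1 - ξ) ^ (-d - 1) * (2 * a) / t *
          ∫ κ in Ioc 0 ξ, κ ^ (a - 1) * Real.exp (-(t / 2) * κ) := by ring
    _ ≤ _ := by gcongr

/-- Lemma 6: under the Exponential-Inverse-Gamma posterior,
`E[κ · 1{κ ≤ ξ}] ≤ K / t` with `K` depending only on `d, k, ξ`. -/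
theorem EIG_posterior_kappa_below_bound
    (d : ℝ) (k : ℕ) (ξ : ℝ) (hd0 : 0 < d) (hd1 : d < 1) (hk : 1 ≤ k)
    (hξ : ξ ∈ Ioo (0:ℝ) 1) :
    ∃ K : ℝ, 0 < K ∧ ∀ c ∈ Ioo (0:ℝ) 1, ∀ t : ℝ, 0 < t →
      (∫ κ in Ioc (0:ℝ) ξ,
          κ * (κ ^ (d + (k : ℝ) / 2 - 1) * (1 - κ + κ * c) ^ (-d - 1) *
            Real.exp (-κ * t / 2))) /
        (∫ κ in Ioo (0:ℝ) 1,
          κ ^ (d + (k : ℝ) / 2 - 1) * (1 - κ + κ * c) ^ (-d - 1) *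
            Real.exp (-κ * t / 2))
      ≤ K / t :=
  EIG_posterior_kappa_below_bound_general d k ξ hd0 hξ
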